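/- arXiv:1704.07212 — 9 statements merged into one kernel-verified Lean document; each statement's English description precedes it below -/
import Mathlib

section
/- For any Z₂Z₂[u]-linear code C (an R-submodule of Z₂^r × R^s), the Gray image Φ(C) is a linear code over Z₂, i.e., a Z₂-linear subspace of Z₂^{r+2s}. -/
open TrivSqZeroExt Polynomial

/-- The four element ring `R = ℤ₂ + u ℤ₂` with `u ^ 2 = 0`, realized as the
dual numbers over `ZMod 2`; the element `u` is `DualNumber.eps`. -/
abbrev Ru : Type := DualNumber (ZMod 2)

instance : Fintype Ru := inferInstanceAs (Fintype (ZMod 2 × ZMod 2))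
instance : DecidableEq Ru := inferInstanceAs (DecidableEq (ZMod 2 × ZMod 2))

/-- The ring homomorphism `η : R → ℤ₂`, `η (p + u q) = p`. -/
noncomputable def eta : Ru →+* ZMod 2 :=
  (TrivSqZeroExt.fstHom (ZMod 2) (ZMod 2) (ZMod 2)).toRingHom

/-- The `R`-module structure on `ℤ₂ʳ × Rˢ`:
`d • (a, b) = (η d * a, d * b)` componentwise. -/
noncomputable instance modM (r s : ℕ) :
    Module Ru ((Fin r → ZMod 2) × (Fin s → Ru)) :=
  letI m1 : Module Ru (ZMod 2) := Module.compHom (ZMod 2) eta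
  letI m2 : Module Ru (Fin r → ZMod 2) :=
    @Pi.module (Fin r) (fun _ => ZMod 2) Ru _ _ (fun _ => m1)
  letI m3 : Module Ru (Fin s → Ru) :=
    @Pi.module (Fin s) (fun _ => Ru) Ru _ _ (fun _ => Semiring.toModule)
  @Prod.instModule _ _ _ _ _ _ m2 m3

/-- Lee weight on `R`: `wt_L 0 = 0`, `wt_L 1 = 1`, `wt_L u = 2`, `wt_L (1+u) = 1`. -/
def leeWt (x : Ru) : ℕ :=
  if TrivSqZeroExt.fst x ≠ 0 then 1 else if TrivSqZeroExt.snd x ≠ 0 then 2 else 0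

/-- The weight: Hamming weight on the `ℤ₂`-part plus Lee weight on the `R`-part. -/
def wt {r s : ℕ} (v : (Fin r → ZMod 2) × (Fin s → Ru)) : ℕ :=
  hammingNorm v.1 + ∑ j, leeWt (v.2 j)

/-- The Gray map `Φ(x, p + u q) = (x, q, p + q)` (componentwise). -/
def gray {r s : ℕ} (v : (Fin r → ZMod 2) × (Fin s → Ru)) :
    Fin (r + 2*s) → ZMod 2 :=
  fun i =>
    Fin.append (Fin.append v.1 (fun j => TrivSqZeroExt.snd (v.2 j)))
      (fun j => TrivSqZeroExt.fst (v.2 j) + TrivSqZeroExt.snd (v.2 j))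
      (Fin.cast (by omega) i)

/-- The inner product `⟨v, w⟩ = u·Σ aᵢdᵢ + Σ bⱼeⱼ ∈ R`. -/
noncomputable def innerP {r s : ℕ} (v w : (Fin r → ZMod 2) × (Fin s → Ru)) : Ru :=
  DualNumber.eps * TrivSqZeroExt.inl (∑ i, v.1 i * w.1 i) + ∑ j, v.2 j * w.2 j

/-- The simultaneous cyclic shift of both blocks. -/
def shiftT {r s : ℕ} (v : (Fin r → ZMod 2) × (Fin s → Ru)) :
    (Fin r → ZMod 2) × (Fin s → Ru) :=
  (fun i => v.1 ⟨(i.val + (r - 1)) % r, Nat.mod_lt _ i.pos⟩,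
   fun j => v.2 ⟨(j.val + (s - 1)) % s, Nat.mod_lt _ j.pos⟩)

/-- The codeword of `ℤ₂ʳ × Rˢ` corresponding to `(l(x), g(x) + u·a(x))`. -/
noncomputable def genword (r s : ℕ) (l g a : Polynomial (ZMod 2)) :
    (Fin r → ZMod 2) × (Fin s → Ru) :=
  (fun i => l.coeff i,
   fun j => TrivSqZeroExt.inl (g.coeff j) + DualNumber.eps * TrivSqZeroExt.inl (a.coeff j))

/-- The cyclic code generated by `(l(x), g(x) + u·a(x))`: the `R`-span of all
simultaneous cyclic shifts of the corresponding codeword. -/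
noncomputable def cycCode (r s : ℕ) (l g a : Polynomial (ZMod 2)) :
    Submodule Ru ((Fin r → ZMod 2) × (Fin s → Ru)) :=
  Submodule.span Ru {v | ∃ k : ℕ, v = shiftT^[k] (genword r s l g a)}

/-- The `γ`-fold replication map `(v_r, v_s) ↦ (v_r, …, v_r, v_s, …, v_s)`. -/
def repMap (γ : ℕ) {r s : ℕ} (v : (Fin r → ZMod 2) × (Fin s → Ru)) :
    (Fin (γ * r) → ZMod 2) × (Fin (γ * s) → Ru) :=
  (fun i => v.1 ⟨i.val % r, Nat.mod_lt _ (by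
      rcases Nat.eq_zero_or_pos r with h | h
      · exact absurd i.isLt (by simp [h])
      · exact h)⟩,
   fun j => v.2 ⟨j.val % s, Nat.mod_lt _ (by
      rcases Nat.eq_zero_or_pos s with h | h
      · exact absurd j.isLt (by simp [h])
      · exact h)⟩)


lemma gray_add {r s : ℕ} (v w : (Fin r → ZMod 2) × (Fin s → Ru)) :
    gray (v + w) = gray v + gray w := by
  funext i
  simp only [gray, Pi.add_apply, Prod.fst_add, Prod.snd_add,
    TrivSqZeroExt.fst_add, TrivSqZeroExt.snd_add]
  generalize Fin.cast _ i = j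
  unfold Fin.append Fin.addCases
  by_cases h : (j : ℕ) < r <;> simp only [h, dif_pos, dif_neg, not_false_iff] <;>
    split_ifs <;> simp only [eq_rec_constant, Pi.add_apply] <;> ring

lemma gray_zero {r s : ℕ} : gray (0 : (Fin r → ZMod 2) × (Fin s → Ru)) = 0 := by
  funext i
  simp only [gray, Prod.fst_zero, Prod.snd_zero, Pi.zero_apply,
    TrivSqZeroExt.fst_zero, TrivSqZeroExt.snd_zero]
  generalize Fin.cast _ i = j
  unfold Fin.append Fin.addCases
  by_cases h : (j : ℕ) < r <;> simp [h]

/-- the Gray image of any `ℤ₂ℤ₂[u]`-linear code (`R`-submodule of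
`ℤ₂ʳ × Rˢ`) is a `ℤ₂`-linear subspace of `ℤ₂^{r+2s}`. -/
theorem gray_image_is_linear (r s : ℕ)
    (C : Submodule Ru ((Fin r → ZMod 2) × (Fin s → Ru))) :
    ∃ W : Submodule (ZMod 2) (Fin (r + 2*s) → ZMod 2),
      (W : Set (Fin (r + 2*s) → ZMod 2)) = gray '' (C : Set _) := by
  refine ⟨{ carrier := gray '' (C : Set _), add_mem' := ?_, zero_mem' := ?_,
              smul_mem' := ?_ }, rfl⟩
  · rintro a b ⟨v, hv, rfl⟩ ⟨w, hw, rfl⟩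
    exact ⟨v + w, C.add_mem hv hw, gray_add v w⟩
  · exact ⟨0, C.zero_mem, gray_zero⟩
  · rintro c x ⟨v, hv, rfl⟩
    have hc : c = 0 ∨ c = 1 := by revert c; decide
    rcases hc with rfl | rfl
    · exact ⟨0, C.zero_mem, by rw [gray_zero, zero_smul]⟩
    · exact ⟨v, hv, by rw [one_smul]⟩
end

section
/- There exist no separable one-weight Z₂Z₂[u]-linear codes: if C = C_r × C_s with C_r ⊆ Z₂^r and C_s ⊆ R^s both nonzero (i.e., C contains a codeword (v,w) with v ≠ 0 and w ≠ 0), then C cannot have all nonzero codewords of the same weight. -/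
open TrivSqZeroExt Polynomial

/-- there do not exist separable one-weight `ℤ₂ℤ₂[u]`-linear codes:
if `C` is the product of its punctured codes and contains a codeword `(v, w)` with
`v ≠ 0` and `w ≠ 0`, then not all nonzero codewords of `C` have the same weight. -/
theorem no_separable_one_weight (r s : ℕ)
    (C : Submodule Ru ((Fin r → ZMod 2) × (Fin s → Ru)))
    (hsep : (C : Set ((Fin r → ZMod 2) × (Fin s → Ru)))
      = (Prod.fst '' (C : Set ((Fin r → ZMod 2) × (Fin s → Ru))))
          ×ˢ (Prod.snd '' (C : Set ((Fin r → ZMod 2) × (Fin s → Ru)))))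
    (hex : ∃ p ∈ C, p.1 ≠ 0 ∧ p.2 ≠ 0) :
    ¬ ∃ m, ∀ c ∈ C, c ≠ 0 → wt c = m := by
  rintro ⟨m, hm⟩
  obtain ⟨⟨v, w⟩, hpC, hv, hw⟩ := hex
  have h1 : (v, (0 : Fin s → Ru)) ∈ C := by
    rw [← SetLike.mem_coe, hsep]
    exact ⟨⟨(v, w), hpC, rfl⟩, ⟨0, C.zero_mem, rfl⟩⟩
  have h2 : ((0 : Fin r → ZMod 2), w) ∈ C := by
    rw [← SetLike.mem_coe, hsep]
    exact ⟨⟨0, C.zero_mem, rfl⟩, ⟨(v, w), hpC, rfl⟩⟩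
  have e1 : wt (v, (0 : Fin s → Ru)) = m := by
    refine hm _ h1 ?_
    simp [Prod.ext_iff, hv]
  have e2 : wt ((0 : Fin r → ZMod 2), w) = m := by
    refine hm _ h2 ?_
    simp [Prod.ext_iff, hw]
  have e3 : wt (v, w) = m := hm _ hpC (by simp [Prod.ext_iff, hv])
  have hsum : wt (v, w) = wt (v, (0 : Fin s → Ru)) + wt ((0 : Fin r → ZMod 2), w) := by
    simp [wt, leeWt, hammingNorm]
  have hmpos : 0 < m := by
    rw [← e1]
    have h : hammingNorm v ≠ 0 := by
      simpa [hammingNorm_eq_zero] using hv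
    have : 0 < hammingNorm v := Nat.pos_of_ne_zero h
    simp only [wt]
    omega
  omega
end

section
/- Let C be a Z₂Z₂[u]-linear code such that no coordinate position is identically zero on C. Then the sum of the weights of all codewords of C equals (|C|/2)·(r + 2s). -/
open TrivSqZeroExt Polynomial

section Aux

lemma leeWt_add_eps (x : Ru) : leeWt x + leeWt (x + DualNumber.eps) = 2 := by
  revert x; decide

lemma Ru_ne_zero_cases (x : Ru) (h : x ≠ 0) :
    TrivSqZeroExt.fst x ≠ 0 ∨ x = DualNumber.eps := by revert h; revert x; decide

lemma eps_mul_of_fst_ne (x : Ru) (h : TrivSqZeroExt.fst x ≠ 0) :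
    DualNumber.eps * x = DualNumber.eps := by revert h; revert x; decide

lemma Ru_add_self (x : Ru) : x + x = 0 := by revert x; decide

lemma zmod_flip (y : ZMod 2) (hy : y ≠ 0) (x : ZMod 2) :
    ((if x ≠ 0 then 1 else 0) + (if x + y ≠ 0 then 1 else 0) : ℕ) = 1 := by
  revert x; revert hy; revert y; decide

end Aux

set_option synthInstance.maxHeartbeats 1000000

/-- if no coordinate position is identically zero on `C`, then the sum
of the weights of all codewords of `C` equals `(|C|/2)·(r + 2s)`. -/
theorem sum_of_weights (r s : ℕ)
    (C : Submodule Ru ((Fin r → ZMod 2) × (Fin s → Ru)))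
    (hcol1 : ∀ i : Fin r, ∃ c ∈ C, c.1 i ≠ 0)
    (hcol2 : ∀ j : Fin s, ∃ c ∈ C, c.2 j ≠ 0) :
    2 * (∑ᶠ c ∈ (C : Set ((Fin r → ZMod 2) × (Fin s → Ru))), wt c)
      = Nat.card C * (r + 2*s) := by
  classical
  have hfin : (C : Set ((Fin r → ZMod 2) × (Fin s → Ru))).Finite := Set.toFinite _
  rw [finsum_mem_eq_finite_toFinset_sum _ hfin]
  have hcardC : Nat.card C = hfin.toFinset.card := Nat.card_eq_card_finite_toFinset hfin
  set F := hfin.toFinset with hFdef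
  have hmem : ∀ c, c ∈ F ↔ c ∈ C := fun c => hfin.mem_toFinset
  have hself : ∀ v : (Fin r → ZMod 2) × (Fin s → Ru), v + v = 0 := by
    intro v
    refine Prod.ext ?_ ?_
    · funext k
      show v.1 k + v.1 k = 0
      exact CharTwo.add_self_eq_zero _
    · funext k
      show v.2 k + v.2 k = 0
      exact Ru_add_self _
  have htrans : ∀ c₀ ∈ C, ∀ f : (Fin r → ZMod 2) × (Fin s → Ru) → ℕ,
      ∑ c ∈ F, f (c + c₀) = ∑ c ∈ F, f c := by
    intro c₀ hc₀ f
    refine Finset.sum_equiv (Equiv.addRight c₀) (fun c => ?_) (fun c _ => rfl)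
    simp only [hmem, Equiv.coe_addRight]
    constructor
    · intro h; exact add_mem h hc₀
    · intro h
      have h2 : c + c₀ + c₀ ∈ C := add_mem h hc₀
      rwa [add_assoc, hself, add_zero] at h2
  have h1 : ∀ i : Fin r,
      2 * ∑ c ∈ F, (if c.1 i ≠ 0 then 1 else 0) = F.card := by
    intro i
    obtain ⟨c₀, hc₀, hne⟩ := hcol1 i
    have ht := htrans c₀ hc₀ (fun c => if c.1 i ≠ 0 then 1 else 0)
    calc 2 * ∑ c ∈ F, (if c.1 i ≠ 0 then (1:ℕ) else 0)
        = ∑ c ∈ F, ((if c.1 i ≠ 0 then 1 else 0)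
            + (if (c + c₀).1 i ≠ 0 then 1 else 0)) := by
          rw [Finset.sum_add_distrib, ht]; ring
      _ = ∑ _c ∈ F, 1 := Finset.sum_congr rfl (fun c _ => by
          have hc : (c + c₀).1 i = c.1 i + c₀.1 i := rfl
          rw [hc]; exact zmod_flip _ hne _)
      _ = F.card := by simp
  have h2 : ∀ j : Fin s,
      2 * ∑ c ∈ F, leeWt (c.2 j) = 2 * F.card := by
    intro j
    obtain ⟨c, hc, hne⟩ := hcol2 j
    have heps : ∃ c₁ ∈ C, c₁.2 j = DualNumber.eps := by
      rcases Ru_ne_zero_cases _ hne with h | h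
      · refine ⟨DualNumber.eps • c, C.smul_mem _ hc, ?_⟩
        show DualNumber.eps * c.2 j = DualNumber.eps
        exact eps_mul_of_fst_ne _ h
      · exact ⟨c, hc, h⟩
    obtain ⟨c₁, hc₁, hc₁j⟩ := heps
    have ht := htrans c₁ hc₁ (fun c => leeWt (c.2 j))
    calc 2 * ∑ c ∈ F, leeWt (c.2 j)
        = ∑ c ∈ F, (leeWt (c.2 j) + leeWt ((c + c₁).2 j)) := by
          rw [Finset.sum_add_distrib, ht]; ring
      _ = ∑ _c ∈ F, 2 := Finset.sum_congr rfl (fun c _ => by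
          have hc2 : (c + c₁).2 j = c.2 j + c₁.2 j := rfl
          rw [hc2, hc₁j]; exact leeWt_add_eps _)
      _ = 2 * F.card := by rw [Finset.sum_const, smul_eq_mul, mul_comm]
  have hwt : ∀ c : (Fin r → ZMod 2) × (Fin s → Ru),
      wt c = (∑ i, if c.1 i ≠ 0 then 1 else 0) + ∑ j, leeWt (c.2 j) := by
    intro c
    unfold wt hammingNorm
    congr 1
    rw [Finset.card_filter]
  have hsplit : ∑ c ∈ F, wt c
      = (∑ i : Fin r, ∑ c ∈ F, (if c.1 i ≠ 0 then 1 else 0))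
        + ∑ j : Fin s, ∑ c ∈ F, leeWt (c.2 j) := by
    simp_rw [hwt]
    rw [Finset.sum_add_distrib]
    congr 1
    · exact Finset.sum_comm
    · exact Finset.sum_comm
  rw [hsplit, hcardC, Nat.mul_add, Finset.mul_sum, Finset.mul_sum]
  rw [Finset.sum_congr rfl (fun i _ => h1 i), Finset.sum_congr rfl (fun j _ => h2 j)]
  simp only [Finset.sum_const, Finset.card_univ, Fintype.card_fin, smul_eq_mul]
  ring
end

section
/- Let C be a one-weight Z₂Z₂[u]-linear code of weight m with no identically-zero coordinate positions. Then there is a positive integer α such that m = α·|C|/2 and r + 2s = α·(|C| − 1). -/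
open TrivSqZeroExt Polynomial

lemma half_count {G : Type*} [AddGroup G] [Fintype G] (g : G → ZMod 2) (c₀ : G)
    (h : ∀ c, g (c + c₀) = g c + 1) :
    2 * (∑ c, if g c ≠ 0 then 1 else 0) = Fintype.card G := by
  have hx : ∀ x : ZMod 2, (x + 1 ≠ 0 ↔ x = 0) := by decide
  have key : (∑ c, if g c ≠ 0 then (1:ℕ) else 0) = ∑ c, if g c = 0 then 1 else 0 := by
    calc (∑ c, if g c ≠ 0 then (1:ℕ) else 0)
        = ∑ c, if g (c + c₀) ≠ 0 then 1 else 0 :=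
          Fintype.sum_equiv (Equiv.addRight c₀).symm _ _ (fun c => by simp)
      _ = ∑ c, if g c = 0 then 1 else 0 := by
          refine Finset.sum_congr rfl fun c _ => ?_
          rw [h c]; simp [hx]
  rw [two_mul]
  nth_rewrite 2 [key]
  rw [← Finset.sum_add_distrib]
  rw [Finset.sum_congr rfl (fun c _ => ?_), Finset.sum_const, Finset.card_univ, smul_eq_mul, mul_one]
  by_cases hgc : g c = 0 <;> simp [hgc]

lemma leeWt_split : ∀ x : Ru, leeWt x = (if TrivSqZeroExt.snd x ≠ 0 then 1 else 0) +
    (if TrivSqZeroExt.fst x + TrivSqZeroExt.snd x ≠ 0 then 1 else 0) := by decide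

/-- for a nonzero one-weight code `C` of weight `m` with no
identically-zero coordinate positions, there is a positive integer `α` with
`m = α·|C|/2` and `r + 2s = α·(|C| − 1)`. -/
theorem one_weight_parameters (r s : ℕ)
    (C : Submodule Ru ((Fin r → ZMod 2) × (Fin s → Ru))) (m : ℕ)
    (hC : C ≠ ⊥)
    (hcol1 : ∀ i : Fin r, ∃ c ∈ C, c.1 i ≠ 0)
    (hcol2 : ∀ j : Fin s, ∃ c ∈ C, c.2 j ≠ 0)
    (hone : ∀ c ∈ C, c ≠ 0 → wt c = m) :
    ∃ α : ℕ, 0 < α ∧ 2 * m = α * Nat.card C ∧ r + 2*s = α * (Nat.card C - 1) := by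
  classical
  haveI : Fintype ↥C := Fintype.ofFinite _
  set N := Fintype.card ↥C with hN
  have hNcard : Nat.card ↥C = N := Nat.card_eq_fintype_card
  obtain ⟨c₁, hc₁C, hc₁⟩ : ∃ c ∈ C, c ≠ 0 := by
    by_contra h
    push_neg at h
    exact hC (by ext x; simp only [Submodule.mem_bot]; exact ⟨fun hx => h x hx, fun hx => hx ▸ C.zero_mem⟩)
  have hN2 : 2 ≤ N := by
    haveI : Nonempty ↥C := ⟨0⟩
    haveI : Nontrivial ↥C := ⟨⟨0, ⟨c₁, hc₁C⟩, fun h => hc₁ (by simpa using congrArg Subtype.val h.symm)⟩⟩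
    exact Fintype.one_lt_card
  -- column sums for the binary block
  have colA : ∀ i : Fin r, 2 * (∑ c : ↥C, if c.val.1 i ≠ 0 then 1 else 0) = N := by
    intro i
    obtain ⟨c₀, hc₀C, hc₀⟩ := hcol1 i
    have h1 : c₀.1 i = 1 := by revert hc₀; generalize c₀.1 i = x; revert x; decide
    exact half_count (fun c : ↥C => c.val.1 i) ⟨c₀, hc₀C⟩ (fun c => by
      show c.val.1 i + c₀.1 i = c.val.1 i + 1; rw [h1])
  -- column sums for the Ru block
  have colB : ∀ j : Fin s,
      2 * (∑ c : ↥C, leeWt (c.val.2 j)) = 2 * N := by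
    intro j
    obtain ⟨c, hcC, hcne⟩ := hcol2 j
    have epsfact : ∀ x : Ru, TrivSqZeroExt.fst (DualNumber.eps * x) = 0 ∧
        TrivSqZeroExt.snd (DualNumber.eps * x) = TrivSqZeroExt.fst x := by decide
    obtain ⟨c₀, hc₀C, hf0, hs1⟩ : ∃ c₀ ∈ C, TrivSqZeroExt.fst (c₀.2 j) = 0 ∧
        TrivSqZeroExt.snd (c₀.2 j) = 1 := by
      by_cases hf : TrivSqZeroExt.fst (c.2 j) = 0
      · refine ⟨c, hcC, hf, ?_⟩
        have hsne : TrivSqZeroExt.snd (c.2 j) ≠ 0 := fun h => hcne (TrivSqZeroExt.ext hf h)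
        revert hsne; generalize TrivSqZeroExt.snd (c.2 j) = x; revert x; decide
      · refine ⟨_, C.smul_mem DualNumber.eps hcC, ?_, ?_⟩
        · show TrivSqZeroExt.fst (DualNumber.eps * c.2 j) = 0
          exact (epsfact _).1
        · show TrivSqZeroExt.snd (DualNumber.eps * c.2 j) = 1
          rw [(epsfact _).2]
          revert hf; generalize TrivSqZeroExt.fst (c.2 j) = x; revert x; decide
    have split : (∑ c : ↥C, leeWt (c.val.2 j)) =
        (∑ c : ↥C, if TrivSqZeroExt.snd (c.val.2 j) ≠ 0 then 1 else 0) +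
        (∑ c : ↥C, if TrivSqZeroExt.fst (c.val.2 j) + TrivSqZeroExt.snd (c.val.2 j) ≠ 0 then 1 else 0) := by
      rw [← Finset.sum_add_distrib]
      exact Finset.sum_congr rfl fun c _ => leeWt_split _
    rw [split, Nat.mul_add, two_mul N]
    congr 1
    · exact half_count (fun c : ↥C => TrivSqZeroExt.snd (c.val.2 j)) ⟨c₀, hc₀C⟩ (fun c => by
        show TrivSqZeroExt.snd (c.val.2 j + c₀.2 j) = TrivSqZeroExt.snd (c.val.2 j) + 1
        rw [TrivSqZeroExt.snd_add, hs1])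
    · exact half_count
        (fun c : ↥C => TrivSqZeroExt.fst (c.val.2 j) + TrivSqZeroExt.snd (c.val.2 j))
        ⟨c₀, hc₀C⟩ (fun c => by
        show TrivSqZeroExt.fst (c.val.2 j + c₀.2 j) + TrivSqZeroExt.snd (c.val.2 j + c₀.2 j) =
          TrivSqZeroExt.fst (c.val.2 j) + TrivSqZeroExt.snd (c.val.2 j) + 1
        rw [TrivSqZeroExt.snd_add, TrivSqZeroExt.fst_add, hs1, hf0]
        ring)
  -- total weight
  have total : 2 * (∑ c : ↥C, wt c.val) = N * (r + 2 * s) := by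
    have expand : (∑ c : ↥C, wt c.val) =
        (∑ i : Fin r, ∑ c : ↥C, if c.val.1 i ≠ 0 then 1 else 0) +
        (∑ j : Fin s, ∑ c : ↥C, leeWt (c.val.2 j)) := by
      calc (∑ c : ↥C, wt c.val)
          = ∑ c : ↥C, ((∑ i : Fin r, if c.val.1 i ≠ 0 then 1 else 0) +
              ∑ j : Fin s, leeWt (c.val.2 j)) := by
            refine Finset.sum_congr rfl fun c _ => ?_
            unfold wt
            congr 1
            rw [hammingNorm, Finset.card_filter]
        _ = (∑ c : ↥C, ∑ i : Fin r, if c.val.1 i ≠ 0 then 1 else 0) +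
            (∑ c : ↥C, ∑ j : Fin s, leeWt (c.val.2 j)) := Finset.sum_add_distrib
        _ = _ := by rw [Finset.sum_comm, Finset.sum_comm (s := Finset.univ (α := ↥C))]
    rw [expand, Nat.mul_add, Finset.mul_sum, Finset.mul_sum]
    rw [Finset.sum_congr rfl (fun i _ => colA i), Finset.sum_congr rfl (fun j _ => colB j)]
    simp only [Finset.sum_const, Finset.card_univ, smul_eq_mul, Fintype.card_fin]
    ring
  -- one-weight: total = (N-1) * m
  have tm : (∑ c : ↥C, wt c.val) = (N - 1) * m := by
    have h0 : wt ((0 : ↥C)).val = 0 := by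
      show wt (0 : (Fin r → ZMod 2) × (Fin s → Ru)) = 0
      have hl : leeWt 0 = 0 := by decide
      simp [wt, hl]
    rw [← Finset.sum_erase (Finset.univ) (f := fun c : ↥C => wt c.val) h0]
    rw [Finset.sum_congr rfl (fun c hc => hone c.val c.prop
      (fun h => (Finset.mem_erase.mp hc).1 (Subtype.ext h)))]
    rw [Finset.sum_const, smul_eq_mul]
    congr 1
    rw [Finset.card_erase_of_mem (Finset.mem_univ _), Finset.card_univ]
  have key : 2 * ((N - 1) * m) = N * (r + 2 * s) := by rw [← tm, ← total]
  -- arithmetic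
  have hcop : Nat.Coprime (N - 1) N := by
    have h' : N = (N - 1) + 1 := by omega
    have h2 : Nat.Coprime (N - 1) ((N - 1) + 1) := by
      unfold Nat.Coprime
      rw [Nat.gcd_self_add_right, Nat.gcd_one_right]
    rwa [← h'] at h2
  have hdvd : (N - 1) ∣ (r + 2 * s) := by
    refine hcop.dvd_of_dvd_mul_left ?_
    exact ⟨2 * m, by rw [← key]; ring⟩
  have hrs : r + 2 * s = (r + 2 * s) / (N - 1) * (N - 1) := (Nat.div_mul_cancel hdvd).symm
  set α := (r + 2 * s) / (N - 1) with hα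
  have hrspos : 0 < r + 2 * s := by
    rcases Nat.eq_zero_or_pos (r + 2 * s) with h | h
    · exfalso
      have hr0 : r = 0 := by omega
      have hs0 : s = 0 := by omega
      subst hr0; subst hs0
      apply hc₁
      exact Prod.ext (funext fun x => x.elim0) (funext fun x => x.elim0)
    · exact h
  have hαpos : 0 < α := by
    rcases Nat.eq_zero_or_pos α with h | h
    · rw [h] at hrs; omega
    · exact h
  refine ⟨α, hαpos, ?_, ?_⟩
  · have heq : (N - 1) * (2 * m) = (N - 1) * (α * N) := by
      calc (N - 1) * (2 * m) = 2 * ((N - 1) * m) := by ring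
        _ = N * (r + 2 * s) := key
        _ = N * (α * (N - 1)) := by rw [← hrs]
        _ = (N - 1) * (α * N) := by ring
    have h2 := Nat.eq_of_mul_eq_mul_left (by omega : 0 < N - 1) heq
    rw [h2, hNcard]
  · rw [hNcard]; exact hrs
end

section
/- Let C be a one-weight Z₂Z₂[u]-linear code of odd weight m with no identically-zero coordinate positions. Then r is odd, m = r + 2s, and C is the code generated by the single codeword (1,...,1 | u,...,u) (all ones in the r binary coordinates, all u's in the s coordinates over R). -/
open TrivSqZeroExt Polynomial

section Aux
set_option maxHeartbeats 1000000
set_option synthInstance.maxHeartbeats 400000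

lemma smul_def' (r s : ℕ) (d : Ru) (c : (Fin r → ZMod 2) × (Fin s → Ru)) :
    d • c = (fun i => eta d * c.1 i, fun j => d * c.2 j) := rfl

lemma zmod2_ne_zero : ∀ x : ZMod 2, x ≠ 0 → x = 1 := by decide

lemma ru_fst_snd_zero (x : Ru) (h1 : TrivSqZeroExt.fst x = 0)
    (h2 : TrivSqZeroExt.snd x = 0) : x = 0 :=
  TrivSqZeroExt.ext (by simpa using h1) (by simpa using h2)

lemma hamming_cast {r : ℕ} (a : Fin r → ZMod 2) :
    ((hammingNorm a : ℕ) : ZMod 2) = ∑ i, a i := by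
  rw [hammingNorm, Finset.card_filter]
  push_cast
  refine Finset.sum_congr rfl fun i _ => ?_
  by_cases h : a i = 0
  · simp [h]
  · simp [h, zmod2_ne_zero _ h]

lemma wt_parity {r s : ℕ} (c : (Fin r → ZMod 2) × (Fin s → Ru))
    (h : ∀ j, TrivSqZeroExt.fst (c.2 j) = 0) :
    ((wt c : ℕ) : ZMod 2) = ∑ i, c.1 i := by
  unfold wt
  have h2 : ((∑ j, leeWt (c.2 j) : ℕ) : ZMod 2) = 0 := by
    push_cast
    refine Finset.sum_eq_zero fun j _ => ?_
    unfold leeWt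
    rw [if_neg (by simp [h j])]
    split <;> decide
  rw [Nat.cast_add, hamming_cast, h2, add_zero]

lemma odd_cast_zmod2 {m : ℕ} (hm : Odd m) : ((m : ℕ) : ZMod 2) = 1 := by
  obtain ⟨k, hk⟩ := hm
  subst hk
  push_cast
  rw [show (2 : ZMod 2) = 0 by decide, zero_mul, zero_add]

lemma char_two_amb {r s : ℕ} (v : (Fin r → ZMod 2) × (Fin s → Ru)) : -v = v := by
  refine Prod.ext (funext fun i => ?_) (funext fun j => ?_)
  · exact CharTwo.neg_eq _
  · show -(v.2 j) = v.2 j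
    refine TrivSqZeroExt.ext ?_ ?_
    · rw [TrivSqZeroExt.fst_neg]; exact CharTwo.neg_eq _
    · rw [TrivSqZeroExt.snd_neg]; exact CharTwo.neg_eq _

end Aux

set_option maxHeartbeats 1000000
set_option synthInstance.maxHeartbeats 400000

/-- a nonzero one-weight code of odd weight `m` with no
identically-zero coordinate positions has `r` odd, `m = r + 2s`, and is generated
by the single codeword `(1,…,1 | u,…,u)`. -/
theorem one_weight_odd (r s : ℕ)
    (C : Submodule Ru ((Fin r → ZMod 2) × (Fin s → Ru))) (m : ℕ)
    (hC : C ≠ ⊥)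
    (hcol1 : ∀ i : Fin r, ∃ c ∈ C, c.1 i ≠ 0)
    (hcol2 : ∀ j : Fin s, ∃ c ∈ C, c.2 j ≠ 0)
    (hone : ∀ c ∈ C, c ≠ 0 → wt c = m)
    (hm : Odd m) :
    Odd r ∧ m = r + 2*s ∧
      C = Submodule.span Ru
        {(((fun _ => 1), (fun _ => DualNumber.eps)) :
          (Fin r → ZMod 2) × (Fin s → Ru))} := by
  classical
  -- Step 1: every codeword has `fst` zero in all `R`-coordinates.
  have hfst : ∀ c ∈ C, ∀ j, TrivSqZeroExt.fst (c.2 j) = 0 := by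
    intro c hc j
    have hmem : (DualNumber.eps : Ru) • c ∈ C := C.smul_mem _ hc
    have heq : (DualNumber.eps : Ru) • c
        = (((fun _ => 0), fun j => DualNumber.eps * c.2 j) :
          (Fin r → ZMod 2) × (Fin s → Ru)) := by
      rw [smul_def']
      refine Prod.ext (funext fun i => ?_) rfl
      show eta DualNumber.eps * c.1 i = 0
      rw [show eta DualNumber.eps = 0 from rfl, zero_mul]
    have hfst0 : ∀ j, TrivSqZeroExt.fst (DualNumber.eps * c.2 j) = 0 := by
      intro j
      rw [TrivSqZeroExt.fst_mul, DualNumber.fst_eps, zero_mul]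
    by_cases hz : (DualNumber.eps : Ru) • c = 0
    · have h0 : DualNumber.eps * c.2 j = 0 := by
        have := congrArg (fun v => v.2 j) (heq.symm.trans hz)
        simpa using this
      have := congrArg TrivSqZeroExt.snd h0
      rw [TrivSqZeroExt.snd_mul, DualNumber.fst_eps, DualNumber.snd_eps] at this
      simpa using this
    · exfalso
      have hw := hone _ hmem hz
      have heven : ((wt ((DualNumber.eps : Ru) • c) : ℕ) : ZMod 2) = 0 := by
        rw [wt_parity _ (by rw [heq]; exact hfst0)]
        rw [heq]
        simp
      rw [hw, odd_cast_zmod2 hm] at heven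
      exact absurd heven (by decide)
  -- nonzero codewords have coordinate-sum 1
  have hS : ∀ c ∈ C, c ≠ 0 → (∑ i, c.1 i : ZMod 2) = 1 := by
    intro c hc hc0
    have h := wt_parity c (hfst c hc)
    rw [hone c hc hc0, odd_cast_zmod2 hm] at h
    exact h.symm
  obtain ⟨c₀, hc₀mem, hc₀ne⟩ := C.ne_bot_iff.mp hC
  -- uniqueness of the nonzero codeword
  have huniq : ∀ c ∈ C, c ≠ 0 → c = c₀ := by
    intro c hc hc0
    by_contra hne
    have hmem : c + c₀ ∈ C := C.add_mem hc hc₀mem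
    have hnz : c + c₀ ≠ 0 := by
      intro h
      exact hne (by rw [eq_neg_of_add_eq_zero_left h, char_two_amb])
    have h3 := hS _ hmem hnz
    rw [show (c + c₀).1 = fun i => c.1 i + c₀.1 i from rfl,
      Finset.sum_add_distrib, hS c hc hc0, hS c₀ hc₀mem hc₀ne] at h3
    exact absurd h3 (by decide)
  -- identify c₀
  have hg1 : ∀ i, c₀.1 i = 1 := by
    intro i
    obtain ⟨c, hc, hci⟩ := hcol1 i
    have hc0 : c ≠ 0 := fun h => hci (by rw [h]; rfl)
    rw [← huniq c hc hc0]
    exact zmod2_ne_zero _ hci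
  have hg2 : ∀ j, c₀.2 j = DualNumber.eps := by
    intro j
    obtain ⟨c, hc, hcj⟩ := hcol2 j
    have hc0 : c ≠ 0 := fun h => hcj (by rw [h]; rfl)
    have hcc : c = c₀ := huniq c hc hc0
    subst hcc
    have hf : TrivSqZeroExt.fst (c.2 j) = 0 := hfst c hc j
    have hs : TrivSqZeroExt.snd (c.2 j) ≠ 0 := fun h =>
      hcj (ru_fst_snd_zero _ hf h)
    exact TrivSqZeroExt.ext (by rw [hf, DualNumber.fst_eps])
      (by rw [zmod2_ne_zero _ hs, DualNumber.snd_eps])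
  have hc0eq : c₀ = (((fun _ => 1), (fun _ => DualNumber.eps)) :
      (Fin r → ZMod 2) × (Fin s → Ru)) :=
    Prod.ext (funext hg1) (funext hg2)
  have hwt0 : wt c₀ = r + 2 * s := by
    rw [hc0eq]
    unfold wt
    have h1 : hammingNorm (fun _ : Fin r => (1 : ZMod 2)) = r := by
      simp [hammingNorm]
    have h2 : leeWt DualNumber.eps = 2 := by
      unfold leeWt
      rw [if_neg (by rw [DualNumber.fst_eps]; simp),
        if_pos (by rw [DualNumber.snd_eps]; exact one_ne_zero)]
    rw [h1]
    simp [h2, Finset.sum_const, mul_comm]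
  have hmval : m = r + 2 * s := by rw [← hone c₀ hc₀mem hc₀ne, hwt0]
  refine ⟨?_, hmval, ?_⟩
  · rw [Nat.odd_iff] at hm ⊢
    omega
  · apply le_antisymm
    · intro c hc
      by_cases h : c = 0
      · rw [h]; exact Submodule.zero_mem _
      · rw [huniq c hc h, hc0eq]
        exact Submodule.subset_span rfl
    · rw [Submodule.span_le, Set.singleton_subset_iff]
      exact hc0eq ▸ hc₀mem
end

section
/- With n = α(N−1) and m = αN/2 for a positive integer α and N = |C| a power of 2 with N ≥ 2, the coefficient of x^{n−2}y² in (1/N)[(x+y)^n + (N−1)(x+y)^{n−m}(x−y)^m] equals α(α−1)(N−1)/2. In particular it is zero if and only if α = 1. -/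
open TrivSqZeroExt Polynomial

/-! With `N = 2t`, `n = α(2t − 1)` and `m = αt`, one has `n − 2m = −α`, so the contribution
`C(n−m,2) + C(m,2) − (n−m)m = ((n − 2m)² − n)/2` of each nonzero codeword is `(α² − n)/2`.
Adding `C(n,2) = n(n − 1)/2` and dividing by `N`, everything but `α(α − 1)(N − 1)/2` cancels. -/

/-- The coefficient of `x^{n-2} y^2` in `(1/N) [(x + y)^n + (N - 1) (x + y)^{n-m} (x - y)^m]`. -/
noncomputable def macWilliamsCoeffTwo (N n m : ℕ) : ℚ :=
  ((n.choose 2 : ℚ) + ((N : ℚ) - 1) * (((n - m).choose 2 : ℚ) + (m.choose 2 : ℚ)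
    - ((n - m : ℕ) : ℚ) * (m : ℚ))) / (N : ℚ)

theorem Nat.cast_choose_two_add_cast_choose_two_sub_mul {K : Type*} [Field K] [NeZero (2 : K)]
    (a b : ℕ) :
    ((a.choose 2 : K) + b.choose 2 - a * b) = (((a : K) - b) ^ 2 - (a + b)) / 2 := by
  rw [Nat.cast_choose_two, Nat.cast_choose_two]
  field_simp
  ring

theorem macWilliamsCoeffTwo_eq {N n m : ℕ} (hmn : m ≤ n) :
    macWilliamsCoeffTwo N n m
      = ((n.choose 2 : ℚ) + ((N : ℚ) - 1) * ((((n : ℚ) - 2 * m) ^ 2 - n) / 2)) / N := by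
  rw [macWilliamsCoeffTwo, Nat.cast_choose_two_add_cast_choose_two_sub_mul, Nat.cast_sub hmn]
  ring_nf

theorem macWilliamsCoeffTwo_replicated {α N : ℕ} (hN : Even N) (hN0 : N ≠ 0) :
    macWilliamsCoeffTwo N (α * (N - 1)) (α * N / 2) = α * ((α : ℚ) - 1) * ((N : ℚ) - 1) / 2 := by
  obtain ⟨t, rfl⟩ := hN
  have hm : α * (t + t) / 2 = α * t := by
    rw [← two_mul, mul_left_comm, Nat.mul_div_cancel_left _ two_pos]
  have hmn : α * t ≤ α * (t + t - 1) := Nat.mul_le_mul_left α (by omega)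
  rw [hm, macWilliamsCoeffTwo_eq hmn, Nat.cast_choose_two, Nat.cast_mul, Nat.cast_sub (by omega)]
  have ht0 : (t : ℚ) ≠ 0 := by exact_mod_cast (by omega : t ≠ 0)
  push_cast
  field_simp
  ring

/-- with `n = α(N−1)` and `m = αN/2`, the coefficient of `x^{n−2}y²`
in `(1/N)[(x+y)^n + (N−1)(x+y)^{n−m}(x−y)^m]`, namely
`(1/N)[C(n,2) + (N−1)(C(n−m,2) + C(m,2) − (n−m)m)]`, equals `α(α−1)(N−1)/2`;
in particular it is zero iff `α = 1`. -/
theorem dual_coeff_two (α N : ℕ) (hα : 0 < α) (hN : ∃ k : ℕ, N = 2 ^ k)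
    (hN2 : 2 ≤ N) :
    ((((α * (N - 1)).choose 2 : ℚ)
        + ((N : ℚ) - 1) * (((α * (N - 1) - α * N / 2).choose 2 : ℚ)
            + ((α * N / 2).choose 2 : ℚ)
            - ((α * (N - 1) - α * N / 2 : ℕ) : ℚ) * ((α * N / 2 : ℕ) : ℚ))) / (N : ℚ)
      = (α : ℚ) * ((α : ℚ) - 1) * ((N : ℚ) - 1) / 2) ∧
    (((((α * (N - 1)).choose 2 : ℚ)
        + ((N : ℚ) - 1) * (((α * (N - 1) - α * N / 2).choose 2 : ℚ)
            + ((α * N / 2).choose 2 : ℚ)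
            - ((α * (N - 1) - α * N / 2 : ℕ) : ℚ) * ((α * N / 2 : ℕ) : ℚ))) / (N : ℚ)
      = 0) ↔ α = 1) := by
  have hEven : Even N := by
    obtain ⟨k, rfl⟩ := hN
    exact (Nat.even_pow' (by rintro rfl; omega)).2 even_two
  change macWilliamsCoeffTwo N (α * (N - 1)) (α * N / 2) = _ ∧
    (macWilliamsCoeffTwo N (α * (N - 1)) (α * N / 2) = 0 ↔ _)
  rw [macWilliamsCoeffTwo_replicated hEven (by omega)]
  refine ⟨rfl, ?_⟩
  have hα0 : (α : ℚ) ≠ 0 := by exact_mod_cast hα.ne'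
  have hN1 : (N : ℚ) - 1 ≠ 0 := by
    rw [sub_ne_zero]; exact_mod_cast (by omega : N ≠ 1)
  simp [hα0, hN1, sub_eq_zero]
end

section
/- With n = N − 1 and m = N/2 for N = |C| a power of 2 with N ≥ 4 (i.e., the case α = 1), the coefficient of x^{n−3}y³ in (1/N)[(x+y)^n + (N−1)(x+y)^{n−m}(x−y)^m] equals (N−1)(N−2)/6, which is at least 1. Hence the dual of a one-weight code with α = 1 and |C| ≥ 4 has minimum distance exactly 3. -/
open TrivSqZeroExt Polynomial

lemma ch2q (a : ℕ) : (a.choose 2 : ℚ) = a*(a-1)/2 := by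
  induction a with
  | zero => simp
  | succ n ih =>
    rw [Nat.choose_succ_succ]
    push_cast [ih, Nat.choose_one_right]
    ring

lemma ch3q (a : ℕ) : (a.choose 3 : ℚ) = a*(a-1)*(a-2)/6 := by
  induction a with
  | zero => simp
  | succ n ih =>
    rw [Nat.choose_succ_succ]
    push_cast [ih, ch2q]
    ring


/-- with `n = N−1` and `m = N/2` (the case `α = 1`), `N ≥ 4` a power
of 2, the coefficient of `x^{n−3}y³` in `(1/N)[(x+y)^n + (N−1)(x+y)^{n−m}(x−y)^m]`,
namely `(1/N)[C(n,3) + (N−1)(C(n−m,3) − C(n−m,2)m + (n−m)C(m,2) − C(m,3))]`,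
equals `(N−1)(N−2)/6`, which is at least 1. -/
theorem dual_coeff_three (N : ℕ) (hN : ∃ k : ℕ, N = 2 ^ k) (hN4 : 4 ≤ N) :
    ((((N - 1).choose 3 : ℚ)
        + ((N : ℚ) - 1) * ((((N - 1) - N / 2).choose 3 : ℚ)
            - (((N - 1) - N / 2).choose 2 : ℚ) * ((N / 2 : ℕ) : ℚ)
            + (((N - 1) - N / 2 : ℕ) : ℚ) * (((N / 2).choose 2 : ℕ) : ℚ)
            - (((N / 2).choose 3 : ℕ) : ℚ))) / (N : ℚ)
      = ((N : ℚ) - 1) * ((N : ℚ) - 2) / 6) ∧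
    (1 : ℚ) ≤ ((N : ℚ) - 1) * ((N : ℚ) - 2) / 6 := by
  obtain ⟨k, rfl⟩ := hN
  have hk : 2 ≤ k := by
    by_contra h
    interval_cases k <;> omega
  obtain ⟨t, ht⟩ : ∃ t : ℕ, 2 ^ k = 2 * t + 4 := by
    refine ⟨2 ^ (k - 1) - 2, ?_⟩
    have : 2 * 2 ^ (k-1) = 2 ^ k := by
      rw [← pow_succ']
      congr 1
      omega
    have h2 : 2 ≤ 2 ^ (k - 1) := by
      calc 2 = 2^1 := rfl
      _ ≤ 2 ^ (k-1) := Nat.pow_le_pow_right (by norm_num) (by omega)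
    omega
  rw [ht]
  have h1 : 2 * t + 4 - 1 = 2 * t + 3 := by omega
  have h2 : (2 * t + 4) / 2 = t + 2 := by omega
  have h3 : 2 * t + 3 - (t + 2) = t + 1 := by omega
  rw [h1, h2, h3]
  constructor
  · rw [ch3q, ch3q, ch2q, ch2q, ch3q]
    push_cast
    have : ((2:ℚ) * t + 4) ≠ 0 := by positivity
    field_simp
    ring
  · have : (0:ℚ) ≤ (t:ℚ) := by positivity
    push_cast
    nlinarith
end

section
/- If C is a one-weight Z₂Z₂[u]-cyclic code in R_{r,s} generated by (l(x), g(x) + u·a(x)) with g(x) ≠ 0 reducing to a nonzero polynomial mod u (so the generator has a free R-component), and the weight of C is m, then m = 2s. -/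
open TrivSqZeroExt Polynomial

/-! Write `v = (x, c + u d)` for the generator, `T` for the cyclic shift and `N` for the Hamming
weight of `c`. The codeword `u v` has weight `2N`, so `m = 2N`. Each codeword `v + u Tⁱ v` also
has weight `m`, so the number of zeros `j` of `c` with `d j + c (j - i) ≠ 0` does not depend on
`i`; summing over `i` shows that `c` has an even number of zeros, hence `N` is odd because `s` is.
Finally `u (v + T v)` has weight `2 wt (c + T c)`, and `wt (c + T c)` is even, so this codeword
cannot have weight `m = 2N`: it vanishes. Thus `c` is invariant under the shift, hence constantly
`1`, and `N = s`. -/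

open Finset Fin.NatCast DualNumber

section Hamming

variable {ι : Type*} [Fintype ι]

theorem hammingNorm_add_card_eq_zero {β : Type*} [Zero β] [DecidableEq β] (c : ι → β) :
    hammingNorm c + #{i | c i = 0} = Fintype.card ι := by
  simpa [hammingNorm] using card_filter_add_card_filter_not (s := univ) (p := fun i => c i ≠ 0)

theorem cast_hammingNorm_eq_sum (c : ι → ZMod 2) : (hammingNorm c : ZMod 2) = ∑ i, c i := by
  have hbool : ∀ x : ZMod 2, (if x ≠ 0 then 1 else 0 : ZMod 2) = x := by decide
  rw [hammingNorm, card_filter, Nat.cast_sum]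
  simp only [Nat.cast_ite, Nat.cast_one, Nat.cast_zero, hbool]

theorem even_hammingNorm_add_comp_equiv (c : ι → ZMod 2) (e : ι ≃ ι) :
    Even (hammingNorm (c + c ∘ e)) := by
  rw [← ZMod.natCast_eq_zero_iff_even, cast_hammingNorm_eq_sum, Pi.add_def, sum_add_distrib,
    Function.comp_def, e.sum_comp c]
  exact CharTwo.add_self_eq_zero _

end Hamming

theorem Fin.eq_of_forall_apply_sub_one {n : ℕ} [NeZero n] {α : Type*} {f : Fin n → α}
    (hf : ∀ j, f (j - 1) = f j) (i j : Fin n) : f i = f j := by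
  have hiter : ∀ k : ℕ, f (j - k) = f j := by
    intro k
    induction k with
    | zero => simp
    | succ k ih => rw [Nat.cast_succ, ← sub_sub, hf, ih]
  simpa using hiter (j - i).val

section Counting

variable {G : Type*} [AddGroup G] [Fintype G]

theorem card_add_apply_sub_ne_zero (c : G → ZMod 2) (x : ZMod 2) (j : G) :
    #{i | x + c (j - i) ≠ 0} = if x = 0 then hammingNorm c else #{k | c k = 0} := by
  have hreindex : #{i | x + c (j - i) ≠ 0} = #{k | x + c k ≠ 0} :=
    card_equiv (Equiv.subLeft j) (by simp)
  have hbit : ∀ y : ZMod 2, y = 0 ∨ y = 1 := by decide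
  have hone : ∀ y : ZMod 2, 1 + y ≠ 0 ↔ y = 0 := by decide
  rw [hreindex]
  rcases hbit x with rfl | rfl
  · simp [hammingNorm]
  · simp only [hone, one_ne_zero, if_false]

theorem card_eq_zero_eq_two_mul_of_card_shift_eq (c d : G → ZMod 2) (hc : c ≠ 0)
    (h : ∀ i, #{j | c j = 0 ∧ d j + c (j - i) ≠ 0} = #{j | c j = 0 ∧ d j ≠ 0}) :
    #{j | c j = 0} = 2 * #{j | c j = 0 ∧ d j ≠ 0} := by
  set N := hammingNorm c
  set Z₀ := #{j | c j = 0 ∧ d j = 0}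
  set τ := #{j | c j = 0 ∧ d j ≠ 0}
  have hZ : #{j | c j = 0} = Z₀ + τ := by
    rw [← card_filter_add_card_filter_not (p := fun j => d j = 0), filter_filter, filter_filter]
  have hG : Fintype.card G = N + (Z₀ + τ) := by
    rw [← hZ]
    exact (hammingNorm_add_card_eq_zero c).symm
  -- Double counting: a zero `j` of `c` contributes, over all shifts `i`, `N` if `d j = 0` and
  -- the number of zeros of `c` otherwise.
  have hsum : ∑ i, #{j | c j = 0 ∧ d j + c (j - i) ≠ 0} = Z₀ * N + τ * (Z₀ + τ) := by
    have hpoint : ∀ j, (if c j = 0 then (if d j = 0 then N else Z₀ + τ) else 0) =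
        (if c j = 0 ∧ d j = 0 then 1 else 0) * N +
          (if c j = 0 ∧ d j ≠ 0 then 1 else 0) * (Z₀ + τ) := by
      intro j
      split_ifs <;> simp_all
    calc ∑ i, #{j | c j = 0 ∧ d j + c (j - i) ≠ 0}
        = ∑ j, if c j = 0 then #{i | d j + c (j - i) ≠ 0} else 0 := by
          simp only [card_filter, ite_and]
          rw [sum_comm]
          simp
      _ = ∑ j, if c j = 0 then (if d j = 0 then N else Z₀ + τ) else 0 := by
          simp only [card_add_apply_sub_ne_zero, hZ]
          rfl
      _ = Z₀ * N + τ * (Z₀ + τ) := by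
          simp only [hpoint, sum_add_distrib, ← sum_mul, ← card_filter]
          rfl
  have hconst : ∑ i, #{j | c j = 0 ∧ d j + c (j - i) ≠ 0} = Fintype.card G * τ := by
    simp [h]
  have hcount : (N + (Z₀ + τ)) * τ = Z₀ * N + τ * (Z₀ + τ) := by
    rw [← hG, ← hconst, hsum]
  have hτ : N * τ = N * Z₀ := by linarith
  rw [hZ, Nat.eq_of_mul_eq_mul_left (hammingNorm_pos_iff.2 hc) hτ]
  ring

end Counting

section Ambient

variable {r s : ℕ}

def modU (v : (Fin r → ZMod 2) × (Fin s → Ru)) : Fin s → ZMod 2 := fun j => (v.2 j).fst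

theorem modU_add (v w : (Fin r → ZMod 2) × (Fin s → Ru)) : modU (v + w) = modU v + modU w :=
  rfl

theorem shiftT_snd [NeZero s] (v : (Fin r → ZMod 2) × (Fin s → Ru)) (j : Fin s) :
    (shiftT v).2 j = v.2 (j - 1) := by
  refine congrArg v.2 (Fin.ext ?_)
  change (j.val + (s - 1)) % s = (j - 1).val
  rw [Fin.val_sub, add_comm]
  rcases (Nat.one_le_iff_ne_zero.2 (NeZero.ne s)).eq_or_lt with hs | hs
  · subst hs
    simp
  · simp [Nat.mod_eq_of_lt hs]

theorem shiftT_iterate_snd [NeZero s] (k : ℕ) (v : (Fin r → ZMod 2) × (Fin s → Ru))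
    (j : Fin s) : (shiftT^[k] v).2 j = v.2 (j - k) := by
  induction k generalizing j with
  | zero => simp
  | succ k ih =>
    rw [Function.iterate_succ_apply', shiftT_snd, ih, sub_sub, Nat.cast_succ, add_comm]

theorem eps_smul_eq (v : (Fin r → ZMod 2) × (Fin s → Ru)) :
    (eps : Ru) • v = (0, fun j => inr (modU v j)) := by
  refine Prod.ext (funext fun i => ?_) (funext fun j => ?_)
  · exact zero_mul (v.1 i)
  · change eps * v.2 j = _
    ext <;> simp [modU]

theorem wt_eq (v : (Fin r → ZMod 2) × (Fin s → Ru)) :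
    wt v = hammingNorm v.1 + hammingNorm (modU v) +
      2 * #{j | modU v j = 0 ∧ (v.2 j).snd ≠ 0} := by
  have hlee : ∀ x : Ru, leeWt x =
      (if x.fst ≠ 0 then 1 else 0) + 2 * if x.fst = 0 ∧ x.snd ≠ 0 then 1 else 0 := by
    intro x
    unfold leeWt
    split_ifs <;> simp_all
  simp only [wt, hlee, sum_add_distrib, ← mul_sum, ← card_filter, add_assoc]
  rfl

theorem wt_eps_smul (v : (Fin r → ZMod 2) × (Fin s → Ru)) :
    wt ((eps : Ru) • v) = 2 * hammingNorm (modU v) := by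
  rw [wt_eq, eps_smul_eq]
  simp [modU, hammingNorm]
  rfl

theorem wt_add_eps_smul (v w : (Fin r → ZMod 2) × (Fin s → Ru)) :
    wt (v + (eps : Ru) • w) = hammingNorm v.1 + hammingNorm (modU v) +
      2 * #{j | modU v j = 0 ∧ (v.2 j).snd + modU w j ≠ 0} := by
  have hmod : modU (v + (eps : Ru) • w) = modU v := by
    ext j
    simp [modU, eps_smul_eq]
  rw [wt_eq, hmod]
  simp [modU, eps_smul_eq]
  rfl

end Ambient

def IsOneWeight {r s : ℕ} (C : Submodule Ru ((Fin r → ZMod 2) × (Fin s → Ru))) (m : ℕ) :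
    Prop :=
  ∀ c ∈ C, c ≠ 0 → wt c = m

namespace IsOneWeight

variable {r s m : ℕ} {C : Submodule Ru ((Fin r → ZMod 2) × (Fin s → Ru))}
  {v : (Fin r → ZMod 2) × (Fin s → Ru)}

theorem wt_eq_of_pos (hC : IsOneWeight C m) {c : (Fin r → ZMod 2) × (Fin s → Ru)}
    (hc : c ∈ C) (hpos : 0 < wt c) : wt c = m :=
  hC c hc (by rintro rfl; simp [wt, hammingNorm, leeWt] at hpos)

theorem eq_two_mul_hammingNorm_modU (hC : IsOneWeight C m) (hv : v ∈ C) (hres : modU v ≠ 0) :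
    m = 2 * hammingNorm (modU v) := by
  have hN := hammingNorm_pos_iff.2 hres
  rw [← wt_eps_smul, hC.wt_eq_of_pos (C.smul_mem _ hv) (by rw [wt_eps_smul]; omega)]

theorem odd_hammingNorm_modU (hC : IsOneWeight C m) (hs : Odd s)
    (hv : ∀ k : ℕ, shiftT^[k] v ∈ C) (hres : modU v ≠ 0) : Odd (hammingNorm (modU v)) := by
  have : NeZero s := ⟨hs.pos.ne'⟩
  set c := modU v with hc
  set d : Fin s → ZMod 2 := fun j => (v.2 j).snd
  have hN := hammingNorm_pos_iff.2 hres
  have hv₀ : v ∈ C := hv 0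
  have hwt : ∀ i : ℕ,
      hammingNorm v.1 + hammingNorm c + 2 * #{j | c j = 0 ∧ d j + c (j - i) ≠ 0} = m := by
    intro i
    have hvi : modU (shiftT^[i] v) = fun j => c (j - i) := by
      ext j
      simp only [modU, shiftT_iterate_snd]
      rfl
    have hwi := hC.wt_eq_of_pos (C.add_mem hv₀ (C.smul_mem eps (hv i)))
      (by rw [wt_add_eps_smul, ← hc]; omega)
    rwa [wt_add_eps_smul, hvi] at hwi
  have hshift : ∀ i : Fin s,
      #{j | c j = 0 ∧ d j + c (j - i) ≠ 0} = #{j | c j = 0 ∧ d j ≠ 0} := by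
    intro i
    have h0 : #{j | c j = 0 ∧ d j + c (j - (0 : ℕ)) ≠ 0} = #{j | c j = 0 ∧ d j ≠ 0} := by
      refine congrArg card (filter_congr fun j _ => ?_)
      simp only [Nat.cast_zero, sub_zero, and_congr_right_iff]
      intro hj
      rw [hj, add_zero]
    have hi := hwt i.val
    rw [Fin.cast_val_eq_self] at hi
    have := hwt 0
    omega
  have hcard := hammingNorm_add_card_eq_zero c
  rw [card_eq_zero_eq_two_mul_of_card_shift_eq c d hres hshift, Fintype.card_fin] at hcard
  obtain ⟨k, hk⟩ := hs
  exact ⟨k - #{j | c j = 0 ∧ d j ≠ 0}, by omega⟩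

theorem modU_sub_one [NeZero s] (hC : IsOneWeight C m) (hv₀ : v ∈ C) (hv₁ : shiftT v ∈ C)
    (hm : m = 2 * hammingNorm (modU v)) (hodd : Odd (hammingNorm (modU v))) (j : Fin s) :
    modU v (j - 1) = modU v j := by
  by_contra hj
  set c := modU v
  have hsum : modU (v + shiftT v) = c + c ∘ Equiv.subRight 1 := by
    rw [modU_add]
    ext i
    simp only [Pi.add_apply, Function.comp_apply, Equiv.subRight_apply, modU, shiftT_snd]
    rfl
  have hne : c + c ∘ Equiv.subRight 1 ≠ 0 := by
    intro h
    have := congrFun h j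
    simp only [Pi.add_apply, Function.comp_apply, Equiv.subRight_apply, Pi.zero_apply] at this
    exact hj (CharTwo.add_eq_zero.1 this).symm
  have hpos := hammingNorm_pos_iff.2 hne
  have hwt := hC.wt_eq_of_pos (C.smul_mem eps (C.add_mem hv₀ hv₁))
    (by rw [wt_eps_smul, hsum]; omega)
  rw [wt_eps_smul, hsum, hm] at hwt
  have := even_hammingNorm_add_comp_equiv c (Equiv.subRight 1)
  rw [show hammingNorm (c + c ∘ Equiv.subRight 1) = hammingNorm c by omega] at this
  exact Nat.not_even_iff_odd.2 hodd this

theorem eq_two_mul_of_modU_ne_zero (hC : IsOneWeight C m) (hs : Odd s)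
    (hv : ∀ k : ℕ, shiftT^[k] v ∈ C) (hres : modU v ≠ 0) : m = 2 * s := by
  have : NeZero s := ⟨hs.pos.ne'⟩
  have hv₀ : v ∈ C := hv 0
  have hv₁ : shiftT v ∈ C := hv 1
  have hm := hC.eq_two_mul_hammingNorm_modU hv₀ hres
  have hinv := hC.modU_sub_one hv₀ hv₁ hm (hC.odd_hammingNorm_modU hs hv hres)
  obtain ⟨j₀, hj₀⟩ := Function.ne_iff.1 hres
  have hall : ∀ j, modU v j ≠ 0 := fun j => Fin.eq_of_forall_apply_sub_one hinv j j₀ ▸ hj₀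
  rw [hm, hammingNorm, filter_true_of_mem (fun j _ => hall j), card_univ, Fintype.card_fin]

end IsOneWeight

theorem one_weight_cyclic_weight_general (r s : ℕ) (hs : Odd s)
    (l g a : Polynomial (ZMod 2))
    (hgd : g.natDegree < s)
    (hg0 : g ≠ 0) (m : ℕ)
    (hone : ∀ c ∈ cycCode r s l g a, c ≠ 0 → wt c = m) :
    m = 2 * s := by
  have hres : modU (genword r s l g a) ≠ 0 := by
    refine Function.ne_iff.2 ⟨⟨g.natDegree, hgd⟩, ?_⟩
    simpa [modU, genword] using hg0
  exact IsOneWeight.eq_two_mul_of_modU_ne_zero hone hs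
    (fun k => Submodule.subset_span ⟨k, rfl⟩) hres

/-- if `C` is a one-weight `ℤ₂ℤ₂[u]`-cyclic code generated by
`(l(x), g(x) + u·a(x))` with `g ≠ 0` (mod `u`), `a ∣ g ∣ x^s − 1`, `s` odd, and
weight `m`, then `m = 2s`. -/
theorem one_weight_cyclic_weight (r s : ℕ) (hs : Odd s)
    (l g a : Polynomial (ZMod 2))
    (hl : l.natDegree < r) (hgd : g.natDegree < s) (had : a.natDegree < s)
    (hg0 : g ≠ 0) (hag : a ∣ g) (hgs : g ∣ (X ^ s - 1)) (m : ℕ)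
    (hone : ∀ c ∈ cycCode r s l g a, c ≠ 0 → wt c = m) :
    m = 2 * s :=
  one_weight_cyclic_weight_general r s hs l g a hgd hg0 m hone
end

section
/- For r > s with s odd, there is no one-weight Z₂Z₂[u]-cyclic code in R_{r,s} generated by (l(x), g(x) + u·a(x)) with g(x) ≢ 0 (mod u). -/
open TrivSqZeroExt Polynomial

/-!
Write a word of `ℤ₂ʳ × Rˢ` as `(x, p + u q)` with binary vectors `x, p, q`; its weight is
`‖x‖ + ‖q‖ + ‖p + q‖`, and the code contains all shifts `X_k` of `(l, g + u a)`. Since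
`u X₀ = (0, u g)`, the common weight is `m = 2 ‖g‖`.

If `g` is not invariant under the shift, `u (X₀ + X₁)` is nonzero of weight `2 ‖g + x g‖`,
so `‖g‖` is even. Comparing the weights of `X₀` and `X₀ + u X_k` and summing over all `k`
(every position meets the support of exactly `‖g‖` of the `s` shifts of `g`) forces
`‖a‖ + ‖g + a‖ = s`, hence `s ≡ ‖g‖ ≡ 0 (mod 2)`.

If `g` is shift invariant it is the all-ones vector and `m = 2s`. Then `X₀ + X_s + u X₀` shows
that `l` is `s`-periodic, so `∑_{k<s} X_k = (c, 1 + u y)` with `c` constant, and its weight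
`s + ‖c‖ ∈ {s, s + r}` is not `2s`.
-/

open Finset Fin.NatCast

section HammingZModTwo

variable {α : Type*} [Fintype α]

lemma hammingNorm_eq_sum_ite (x : α → ZMod 2) :
    hammingNorm x = ∑ z, if x z ≠ 0 then 1 else 0 := by
  rw [hammingNorm, card_filter]

lemma cast_hammingNorm_zmod_two (x : α → ZMod 2) : (hammingNorm x : ZMod 2) = ∑ z, x z := by
  rw [hammingNorm_eq_sum_ite, Nat.cast_sum]
  exact sum_congr rfl fun z _ =>
    (by decide : ∀ a : ZMod 2, ((if a ≠ 0 then 1 else 0 : ℕ) : ZMod 2) = a) (x z)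

lemma hammingNorm_add_hammingNorm_one_add (x : α → ZMod 2) :
    hammingNorm x + hammingNorm (1 + x) = Fintype.card α := by
  rw [hammingNorm_eq_sum_ite, hammingNorm_eq_sum_ite, ← sum_add_distrib,
    Fintype.card_eq_sum_ones]
  exact sum_congr rfl fun z _ =>
    (by decide : ∀ a : ZMod 2, ((if a ≠ 0 then 1 else 0) + if 1 + a ≠ 0 then 1 else 0) = 1)
      (x z)

lemma hammingNorm_one : hammingNorm (1 : α → ZMod 2) = Fintype.card α := by
  simp [hammingNorm]

variable [AddGroup α]

lemma sum_hammingNorm_add_translate (x y : α → ZMod 2) :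
    ∑ k, hammingNorm (x + fun z => y (z - k)) + 2 * hammingNorm x * hammingNorm y =
      Fintype.card α * (hammingNorm x + hammingNorm y) := by
  let ind : ZMod 2 → ℕ := fun a => if a ≠ 0 then 1 else 0
  have hpt : ∀ a b : ZMod 2, ind (a + b) + 2 * (ind a * ind b) = ind a + ind b := by decide
  have htrans : ∀ k, ∑ z, ind (y (z - k)) = hammingNorm y := fun k => by
    rw [hammingNorm_eq_sum_ite]; exact Fintype.sum_equiv (Equiv.subRight k) _ _ fun _ => rfl
  have hcross : ∑ k, ∑ z, ind (x z) * ind (y (z - k)) = hammingNorm x * hammingNorm y := by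
    rw [sum_comm, hammingNorm_eq_sum_ite x, sum_mul]
    refine sum_congr rfl fun z _ => ?_
    rw [← mul_sum, hammingNorm_eq_sum_ite y]
    exact congrArg _ (Fintype.sum_equiv (Equiv.subLeft z) _ _ fun _ => rfl)
  calc ∑ k, hammingNorm (x + fun z => y (z - k)) + 2 * hammingNorm x * hammingNorm y
      = ∑ k, ∑ z, (ind (x z + y (z - k)) + 2 * (ind (x z) * ind (y (z - k)))) := by
        simp only [sum_add_distrib, ← mul_sum, hcross, hammingNorm_eq_sum_ite, mul_assoc]
        rfl
    _ = ∑ k, ∑ z, (ind (x z) + ind (y (z - k))) := by simp only [hpt]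
    _ = Fintype.card α * (hammingNorm x + hammingNorm y) := by
        simp only [sum_add_distrib, htrans, sum_const, card_univ, smul_eq_mul, mul_add,
          hammingNorm_eq_sum_ite x]
        rfl

end HammingZModTwo

lemma Fin.mk_add_sub_one_mod {n : ℕ} [NeZero n] (i : Fin n) :
    (⟨(i.val + (n - 1)) % n, Nat.mod_lt _ i.pos⟩ : Fin n) = i - 1 := by
  rcases Nat.lt_or_ge n 2 with hn | hn
  · have : n = 1 := by have := NeZero.pos n; omega
    subst this; exact Subsingleton.elim _ _
  · ext
    rw [Fin.val_sub, Fin.val_one', Nat.mod_eq_of_lt hn, add_comm]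

lemma Fin.apply_eq_apply_zero_of_sub_one {n : ℕ} [NeZero n] {β : Type*} {f : Fin n → β}
    (h : ∀ z, f (z - 1) = f z) (z : Fin n) : f z = f 0 := by
  have hk : ∀ k : ℕ, ∀ z, f (z - (k : Fin n)) = f z := by
    intro k
    induction k with
    | zero => simp
    | succ k ih => intro z; rw [Nat.cast_succ, ← sub_sub, h, ih]
  simpa using (hk z.val z).symm

lemma Fin.eq_one_of_apply_sub_one_eq {n : ℕ} [NeZero n] {f : Fin n → ZMod 2}
    (h : ∀ z, f (z - 1) = f z) (hf : f ≠ 0) : f = 1 := by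
  have hconst := apply_eq_apply_zero_of_sub_one h
  have h0 : f 0 ≠ 0 := fun h0 => hf (funext fun z => (hconst z).trans h0)
  exact funext fun z => (hconst z).trans ((by decide : ∀ a : ZMod 2, a ≠ 0 → a = 1) _ h0)

section Words

variable {r s : ℕ}

def mkWord (x : Fin r → ZMod 2) (p q : Fin s → ZMod 2) : (Fin r → ZMod 2) × (Fin s → Ru) :=
  (x, fun j => inl (p j) + inr (q j))

lemma mkWord_add (x x' : Fin r → ZMod 2) (p p' q q' : Fin s → ZMod 2) :
    mkWord x p q + mkWord x' p' q' = mkWord (x + x') (p + p') (q + q') := by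
  ext j <;> simp [mkWord]

lemma mkWord_sum {ι : Type*} (t : Finset ι) (x : ι → Fin r → ZMod 2)
    (p q : ι → Fin s → ZMod 2) :
    ∑ i ∈ t, mkWord (x i) (p i) (q i) =
      mkWord (∑ i ∈ t, x i) (∑ i ∈ t, p i) (∑ i ∈ t, q i) := by
  classical
  induction t using Finset.induction_on with
  | empty => ext j <;> simp [mkWord]
  | insert i t hi ih => simp only [sum_insert hi, ih, mkWord_add]

lemma eps_smul_mkWord (x : Fin r → ZMod 2) (p q : Fin s → ZMod 2) :
    (DualNumber.eps : Ru) • mkWord x p q = mkWord 0 0 p := by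
  refine Prod.ext (funext fun i => zero_mul (x i)) (funext fun j => ?_)
  change DualNumber.eps * (inl (p j) + inr (q j)) = inl 0 + inr (p j)
  ext <;> simp

lemma mkWord_ne_zero {x : Fin r → ZMod 2} {p q : Fin s → ZMod 2} (h : p ≠ 0 ∨ q ≠ 0) :
    mkWord x p q ≠ 0 := by
  intro h0
  have hpq : p = 0 ∧ q = 0 := by
    constructor <;> funext j
    · simpa [mkWord] using congrArg (fun v => fst (v.2 j)) h0
    · simpa [mkWord] using congrArg (fun v => snd (v.2 j)) h0
  tauto

lemma wt_mkWord (x : Fin r → ZMod 2) (p q : Fin s → ZMod 2) :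
    wt (mkWord x p q) = hammingNorm x + hammingNorm q + hammingNorm (p + q) := by
  rw [wt, add_assoc, hammingNorm_eq_sum_ite q, hammingNorm_eq_sum_ite (p + q), ← sum_add_distrib]
  congr 1
  refine sum_congr rfl fun j _ => ?_
  exact (by decide : ∀ a b : ZMod 2, leeWt (inl a + inr b) =
    (if b ≠ 0 then 1 else 0) + if a + b ≠ 0 then 1 else 0) (p j) (q j)

lemma genword_eq_mkWord (l g a : Polynomial (ZMod 2)) :
    genword r s l g a =
      mkWord (fun i => l.coeff i) (fun j => g.coeff j) (fun j => a.coeff j) := by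
  refine Prod.ext rfl (funext fun j => ?_)
  change inl _ + DualNumber.eps * inl _ = inl _ + inr _
  ext <;> simp

lemma shiftT_mkWord [NeZero r] [NeZero s] (x : Fin r → ZMod 2) (p q : Fin s → ZMod 2) :
    shiftT (mkWord x p q) =
      mkWord (fun i => x (i - 1)) (fun j => p (j - 1)) (fun j => q (j - 1)) := by
  simp only [shiftT, mkWord, Fin.mk_add_sub_one_mod]

lemma shiftT_iterate_mkWord [NeZero r] [NeZero s] (x : Fin r → ZMod 2) (p q : Fin s → ZMod 2)
    (k : ℕ) : shiftT^[k] (mkWord x p q) =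
      mkWord (fun i => x (i - (k : Fin r))) (fun j => p (j - (k : Fin s)))
        (fun j => q (j - (k : Fin s))) := by
  induction k generalizing x p q with
  | zero => simp
  | succ k ih =>
    rw [Function.iterate_succ_apply, shiftT_mkWord, ih]
    simp only [Nat.cast_succ, sub_sub]

end Words

section OneWeight

variable {r s : ℕ} {C : Submodule Ru ((Fin r → ZMod 2) × (Fin s → Ru))} {m : ℕ}

lemma hammingNorm_add_eq_of_one_weight (hm : ∀ c ∈ C, c ≠ 0 → wt c = m)
    {x : Fin r → ZMod 2} {p q : Fin s → ZMod 2} (hc : mkWord x p q ∈ C)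
    (h : p ≠ 0 ∨ q ≠ 0) :
    hammingNorm x + hammingNorm q + hammingNorm (p + q) = m :=
  wt_mkWord x p q ▸ hm _ hc (mkWord_ne_zero h)

variable {L : Fin r → ZMod 2} {G A : Fin s → ZMod 2}

lemma eq_two_mul_hammingNorm_of_one_weight (hm : ∀ c ∈ C, c ≠ 0 → wt c = m)
    (hX : ∀ k : ℕ, shiftT^[k] (mkWord L G A) ∈ C) (hG : G ≠ 0) : m = 2 * hammingNorm G := by
  have hc := C.smul_mem (DualNumber.eps : Ru) (hX 0)
  rw [Function.iterate_zero_apply, eps_smul_mkWord] at hc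
  have := hammingNorm_add_eq_of_one_weight hm hc (Or.inr hG)
  rw [hammingNorm_zero, zero_add, zero_add] at this
  omega

variable [NeZero r] [NeZero s]

lemma even_hammingNorm_of_one_weight (hm : ∀ c ∈ C, c ≠ 0 → wt c = m)
    (hX : ∀ k : ℕ, shiftT^[k] (mkWord L G A) ∈ C) (hG : G ≠ 0)
    (hshift : (fun j => G (j - 1)) ≠ G) : Even (hammingNorm G) := by
  set G₁ : Fin s → ZMod 2 := fun j => G (j - 1)
  have hc : mkWord 0 0 (G + G₁) ∈ C := by
    have := C.add_mem (C.smul_mem (DualNumber.eps : Ru) (hX 0))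
      (C.smul_mem (DualNumber.eps : Ru) (hX 1))
    rwa [Function.iterate_zero_apply, Function.iterate_one, shiftT_mkWord, eps_smul_mkWord,
      eps_smul_mkWord, mkWord_add, add_zero] at this
  have hne : G + G₁ ≠ 0 := fun h =>
    hshift (funext fun j => (CharTwo.add_eq_zero.1 (congrFun h j)).symm)
  have hweight := hammingNorm_add_eq_of_one_weight hm hc (Or.inr hne)
  rw [eq_two_mul_hammingNorm_of_one_weight hm hX hG, hammingNorm_zero, zero_add,
    zero_add] at hweight
  have hsum : ∑ j, G₁ j = ∑ j, G j := Fintype.sum_equiv (Equiv.subRight 1) _ _ fun _ => rfl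
  rw [← ZMod.natCast_eq_zero_iff_even, show hammingNorm G = hammingNorm (G + G₁) by omega,
    cast_hammingNorm_zmod_two]
  simp only [Pi.add_apply, sum_add_distrib, hsum, CharTwo.add_self_eq_zero]

lemma cast_card_eq_hammingNorm_of_one_weight (hm : ∀ c ∈ C, c ≠ 0 → wt c = m)
    (hX : ∀ k : ℕ, shiftT^[k] (mkWord L G A) ∈ C) (hG : G ≠ 0) :
    (s : ZMod 2) = hammingNorm G := by
  set c := hammingNorm A + hammingNorm (G + A)
  have h₀ : hammingNorm L + c = m := by
    have := hammingNorm_add_eq_of_one_weight hm (hX 0) (Or.inl hG)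
    simpa [c, add_assoc] using this
  have hk : ∀ k : Fin s, hammingNorm (A + fun j => G (j - k)) +
      hammingNorm ((G + A) + fun j => G (j - k)) = c := by
    intro k
    have hc : mkWord L G (A + fun j => G (j - k)) ∈ C := by
      have := C.add_mem (hX 0) (C.smul_mem (DualNumber.eps : Ru) (hX k.val))
      simpa [shiftT_iterate_mkWord, eps_smul_mkWord, mkWord_add] using this
    have := hammingNorm_add_eq_of_one_weight hm hc (Or.inl hG)
    rw [← add_assoc G] at this
    omega
  have hsum := congrArg₂ (· + ·) (sum_hammingNorm_add_translate A G)
    (sum_hammingNorm_add_translate (G + A) G)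
  simp only [Fintype.card_fin] at hsum
  rw [add_add_add_comm, ← sum_add_distrib, sum_congr rfl fun k _ => hk k] at hsum
  have hcs : c = s := by
    simp only [sum_const, card_univ, Fintype.card_fin, smul_eq_mul] at hsum
    refine Nat.eq_of_mul_eq_mul_right (hammingNorm_pos_iff.2 hG) ?_
    simp only [c] at hsum ⊢
    linarith
  calc (s : ZMod 2) = (c : ZMod 2) := by rw [hcs]
    _ = _ := by
      rw [Nat.cast_add, cast_hammingNorm_zmod_two, cast_hammingNorm_zmod_two,
        cast_hammingNorm_zmod_two]
      simp only [Pi.add_apply, sum_add_distrib]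
      rw [add_comm (∑ j, G j), CharTwo.add_cancel_left]

end OneWeight

section AllOnes

variable {r s : ℕ} [NeZero r] [NeZero s] {C : Submodule Ru ((Fin r → ZMod 2) × (Fin s → Ru))}
  {m : ℕ} {L : Fin r → ZMod 2} {A : Fin s → ZMod 2}

lemma apply_sub_card_eq_of_one_weight (hm : ∀ c ∈ C, c ≠ 0 → wt c = m)
    (hX : ∀ k : ℕ, shiftT^[k] (mkWord L 1 A) ∈ C) (i : Fin r) :
    L (i - (s : Fin r)) = L i := by
  have hc : mkWord (L + fun i => L (i - (s : Fin r))) 0 1 ∈ C := by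
    have := C.add_mem (C.add_mem (hX 0) (hX s)) (C.smul_mem (DualNumber.eps : Ru) (hX 0))
    rw [Function.iterate_zero_apply, shiftT_iterate_mkWord, eps_smul_mkWord, mkWord_add,
      mkWord_add] at this
    convert this using 2 <;> funext j <;> simp [CharTwo.add_self_eq_zero]
  have hweight := hammingNorm_add_eq_of_one_weight hm hc (Or.inr one_ne_zero)
  rw [eq_two_mul_hammingNorm_of_one_weight hm hX one_ne_zero, zero_add, hammingNorm_one,
    Fintype.card_fin, add_assoc, ← two_mul, Nat.add_eq_right, hammingNorm_eq_zero] at hweight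
  exact (CharTwo.add_eq_zero.1 (congrFun hweight i)).symm

lemma false_of_one_weight_of_all_ones (hm : ∀ c ∈ C, c ≠ 0 → wt c = m)
    (hX : ∀ k : ℕ, shiftT^[k] (mkWord L 1 A) ∈ C) (hs : Odd s) (hrs : r ≠ s) : False := by
  set F : Fin r → ZMod 2 := ∑ k ∈ range s, fun i => L (i - (k : Fin r))
  have hF : ∀ i, F (i - 1) = F i := by
    intro i
    have h := (sum_range_succ' (fun k => L (i - (k : Fin r))) s).symm.trans
      (sum_range_succ (fun k => L (i - (k : Fin r))) s)
    simp only [Nat.cast_succ, Nat.cast_zero, sub_zero, apply_sub_card_eq_of_one_weight hm hX,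
      sub_add_eq_sub_sub_swap] at h
    simpa [F, Finset.sum_apply] using add_right_cancel h
  have hc : mkWord F 1 (∑ k ∈ range s, fun j => A (j - (k : Fin s))) ∈ C := by
    have := C.sum_mem fun k (_ : k ∈ range s) => hX k
    simp only [shiftT_iterate_mkWord, mkWord_sum] at this
    convert this using 2
    funext j
    simp [Finset.sum_apply, (ZMod.natCast_eq_one_iff_odd).2 hs]
  have hweight := hammingNorm_add_eq_of_one_weight hm hc (Or.inl one_ne_zero)
  rw [eq_two_mul_hammingNorm_of_one_weight hm hX one_ne_zero, add_assoc,
    hammingNorm_add_hammingNorm_one_add, hammingNorm_one, Fintype.card_fin] at hweight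
  have hFs : hammingNorm F = s := by omega
  have hF0 : F ≠ 0 := fun h => NeZero.ne s (by rw [← hFs, h, hammingNorm_zero])
  rw [Fin.eq_one_of_apply_sub_one_eq hF hF0, hammingNorm_one, Fintype.card_fin] at hFs
  exact hrs hFs

end AllOnes

theorem no_one_weight_cyclic_r_gt_s_general (r s : ℕ) (hs : Odd s) (hrs : s < r)
    (l g a : Polynomial (ZMod 2))
    (hgd : g.natDegree < s)
    (hg0 : g ≠ 0) :
    ¬ ∃ m, ∀ c ∈ cycCode r s l g a, c ≠ 0 → wt c = m := by
  rintro ⟨m, hm⟩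
  have : NeZero s := ⟨hs.pos.ne'⟩
  have : NeZero r := ⟨(hs.pos.trans hrs).ne'⟩
  set G : Fin s → ZMod 2 := fun j => g.coeff j
  have hX : ∀ k : ℕ, shiftT^[k] (mkWord (fun i : Fin r => l.coeff i) G (fun j => a.coeff j)) ∈
      cycCode r s l g a := fun k => Submodule.subset_span ⟨k, by rw [genword_eq_mkWord]⟩
  have hG : G ≠ 0 := fun h => hg0 (leadingCoeff_eq_zero.1 (congrFun h ⟨_, hgd⟩))
  by_cases hshift : (fun j => G (j - 1)) = G
  · rw [Fin.eq_one_of_apply_sub_one_eq (congrFun hshift) hG] at hX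
    exact false_of_one_weight_of_all_ones hm hX hs hrs.ne'
  · have hcard := cast_card_eq_hammingNorm_of_one_weight hm hX hG
    rw [(ZMod.natCast_eq_zero_iff_even).2 (even_hammingNorm_of_one_weight hm hX hG hshift),
      ZMod.natCast_eq_zero_iff_even] at hcard
    exact Nat.not_even_iff_odd.2 hs hcard

/-- for `r > s` with `s` odd, there is no one-weight
`ℤ₂ℤ₂[u]`-cyclic code generated by `(l(x), g(x) + u·a(x))` with `g ≢ 0 (mod u)`. -/
theorem no_one_weight_cyclic_r_gt_s (r s : ℕ) (hs : Odd s) (hrs : s < r)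
    (l g a : Polynomial (ZMod 2))
    (hl : l.natDegree < r) (hgd : g.natDegree < s) (had : a.natDegree < s)
    (hg0 : g ≠ 0) (hag : a ∣ g) (hgs : g ∣ (X ^ s - 1)) :
    ¬ ∃ m, ∀ c ∈ cycCode r s l g a, c ≠ 0 → wt c = m :=
  no_one_weight_cyclic_r_gt_s_general r s hs hrs l g a hgd hg0
end
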